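/- arXiv:2411.14651 — 6 statements merged into one kernel-verified Lean document; each statement's English description precedes it below -/
import Mathlib

section
/- Let U : Ω → ℝ^d be paramonotone on a convex set Ω. If a ∈ Ω is a solution of the variational inequality VI(U, Ω) (i.e. ⟨U(a), c − a⟩ ≥ 0 for all c ∈ Ω), and b ∈ Ω satisfies ⟨U(b), b − a⟩ = 0, then b is also a solution of VI(U, Ω). -/
open InnerProductSpace

theorem stmt_0 {d : ℕ} (Ω : Set (EuclideanSpace ℝ (Fin d)))
    (U : EuclideanSpace ℝ (Fin d) → EuclideanSpace ℝ (Fin d))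
    (hΩne : Ω.Nonempty) (hΩcl : IsClosed Ω) (hΩconv : Convex ℝ Ω)
    (hmono : ∀ a ∈ Ω, ∀ b ∈ Ω, (0:ℝ) ≤ inner ℝ (U a - U b) (a - b))
    (hpara : ∀ a ∈ Ω, ∀ b ∈ Ω, (inner ℝ (U a - U b) (a - b) : ℝ) = 0 → U a = U b)
    (a : EuclideanSpace ℝ (Fin d)) (ha : a ∈ Ω)
    (hsol : ∀ c ∈ Ω, (0:ℝ) ≤ inner ℝ (U a) (c - a))
    (b : EuclideanSpace ℝ (Fin d)) (hb : b ∈ Ω)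
    (hzero : (inner ℝ (U b) (b - a) : ℝ) = 0) :
    ∀ c ∈ Ω, (0:ℝ) ≤ inner ℝ (U b) (c - b) := by
  have h1 : (0:ℝ) ≤ inner ℝ (U a) (b - a) := hsol b hb
  have h2 : (0:ℝ) ≤ inner ℝ (U b - U a) (b - a) := hmono b hb a ha
  have hexp : (inner ℝ (U b - U a) (b - a) : ℝ)
      = inner ℝ (U b) (b - a) - inner ℝ (U a) (b - a) := by
    rw [inner_sub_left]
  have h3 : (inner ℝ (U b - U a) (b - a) : ℝ) = 0 := by
    rw [hexp, hzero]; linarith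
  have hUba : U b = U a := hpara b hb a ha h3
  have hUab : (inner ℝ (U a) (b - a) : ℝ) = 0 := by
    have := hexp
    rw [h3, hzero] at this
    linarith
  intro c hc
  rw [hUba]
  have : (inner ℝ (U a) (c - b) : ℝ) = inner ℝ (U a) (c - a) - inner ℝ (U a) (b - a) := by
    rw [← inner_sub_right]; congr 1; abel
  rw [this, hUab]
  have := hsol c hc
  linarith
end

section
/- Let 1 ≤ p < ∞ and 1 ≤ q ≤ ∞. Suppose u : [0,∞) → [0,∞) is locally absolutely continuous with u ∈ L^p([0,∞)), w ∈ L^q([0,∞)), and u'(t) ≤ w(t) for almost every t ≥ 0. Then lim_{t→∞} u(t) = 0. -/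
open MeasureTheory Set Filter

set_option maxHeartbeats 1000000

private lemma tail_tendsto_aux {f : ℝ → ℝ}
    (hf : Integrable f (volume.restrict (Ici (0:ℝ)))) :
    Tendsto (fun T => ∫ t in Ici T, f t ∂(volume.restrict (Ici (0:ℝ)))) atTop (nhds 0) := by
  have h := MeasureTheory.tendsto_integral_filter_of_dominated_convergence
    (μ := volume.restrict (Ici (0:ℝ))) (l := (atTop : Filter ℝ))
    (F := fun T => (Ici T).indicator f) (f := fun _ => (0:ℝ)) (bound := fun x => ‖f x‖)
    (Eventually.of_forall fun T => hf.1.indicator measurableSet_Ici)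
    (Eventually.of_forall fun T => Eventually.of_forall fun x =>
      norm_indicator_le_norm_self f x)
    hf.norm
    (Eventually.of_forall fun x => by
      have h0 : (fun T => (Ici T).indicator f x) =ᶠ[(atTop : Filter ℝ)] fun _ => (0:ℝ) := by
        filter_upwards [eventually_gt_atTop x] with T hT
        exact indicator_of_notMem (by simpa using hT.not_ge) f
      exact Tendsto.congr' h0.symm tendsto_const_nhds)
  simpa [integral_indicator measurableSet_Ici] using h

/-- If `1 ≤ p < ∞`, `1 ≤ q ≤ ∞`, `u : [0,∞) → [0,∞)` is locally absolutely continuous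
(encoded via the FTC with a.e. derivative `u'`), `u ∈ L^p([0,∞))`, `w ∈ L^q([0,∞))` and
`u'(t) ≤ w(t)` for a.e. `t ≥ 0`, then `u(t) → 0` as `t → ∞`. -/
theorem stmt_2 (p q : ENNReal) (hp1 : 1 ≤ p) (hp2 : p < ⊤) (hq1 : 1 ≤ q)
    (u u' w : ℝ → ℝ)
    (hunn : ∀ t, 0 ≤ t → 0 ≤ u t)
    (hderiv : ∀ᵐ t ∂(volume.restrict (Ici (0:ℝ))), HasDerivAt u (u' t) t)
    (hloc : ∀ a b : ℝ, 0 ≤ a → a ≤ b → IntervalIntegrable u' volume a b)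
    (hFTC : ∀ a b : ℝ, 0 ≤ a → a ≤ b → u b - u a = ∫ t in a..b, u' t)
    (hu : MemLp u p (volume.restrict (Ici (0:ℝ))))
    (hw : MemLp w q (volume.restrict (Ici (0:ℝ))))
    (hle : ∀ᵐ t ∂(volume.restrict (Ici (0:ℝ))), u' t ≤ w t) :
    Tendsto u atTop (nhds 0) := by
  set μ := volume.restrict (Ici (0:ℝ)) with hμ
  -- restriction lemma
  have hres : ∀ s t : ℝ, 0 ≤ s → μ.restrict (Ioc s t) = volume.restrict (Ioc s t) := by
    intro s t hs
    have hsub : Ioc s t ∩ Ici (0:ℝ) = Ioc s t :=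
      inter_eq_self_of_subset_left (fun x hx => le_trans hs (le_of_lt hx.1))
    rw [hμ, Measure.restrict_restrict measurableSet_Ioc, hsub]
  -- w is interval integrable on intervals in [0,∞)
  have hwInt : ∀ s t : ℝ, 0 ≤ s → s ≤ t → IntervalIntegrable w volume s t := by
    intro s t hs hst
    have h1 : MemLp w q (μ.restrict (Ioc s t)) := hw.restrict _
    rw [hres s t hs] at h1
    haveI : IsFiniteMeasure (volume.restrict (Ioc s t)) :=
      ⟨by rw [Measure.restrict_apply_univ]; simp [Real.volume_Ioc]⟩
    exact (intervalIntegrable_iff_integrableOn_Ioc_of_le hst).mpr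
      (memLp_one_iff_integrable.mp (h1.mono_exponent hq1))
  -- key: small integrals of w over short far-out intervals
  have key : ∀ ε : ℝ, 0 < ε → ∃ δ : ℝ, 0 < δ ∧ ∃ T : ℝ, 0 ≤ T ∧
      ∀ s t : ℝ, T ≤ s → s ≤ t → t ≤ s + δ → (∫ x in s..t, w x) ≤ ε := by
    intro ε hε
    rcases eq_or_ne q ⊤ with hq | hq
    · -- bounded case
      have hB : eLpNormEssSup w μ < ⊤ := by
        have := hw.2; rwa [hq, eLpNorm_exponent_top] at this
      set C := (eLpNormEssSup w μ).toReal with hC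
      have hCnn : 0 ≤ C := ENNReal.toReal_nonneg
      have hbound : ∀ᵐ x ∂μ, w x ≤ C := by
        filter_upwards [ae_le_eLpNormEssSup (f := w) (μ := μ)] with x hx
        have h1 : ‖w x‖ ≤ C := by
          have := ENNReal.toReal_mono hB.ne hx
          simpa [coe_nnnorm] using this
        exact le_trans (le_abs_self _) (by simpa [Real.norm_eq_abs] using h1)
      refine ⟨ε / (C + 1), by positivity, 0, le_refl _, fun s t hs hst hts => ?_⟩
      have hae : ∀ᵐ x ∂(volume.restrict (Icc s t)), w x ≤ C := by
        have hsub : Icc s t ⊆ Ici (0:ℝ) := fun x hx => le_trans hs hx.1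
        exact ae_restrict_of_ae_restrict_of_subset hsub hbound
      have h1 : (∫ x in s..t, w x) ≤ ∫ x in s..t, C := by
        exact intervalIntegral.integral_mono_ae_restrict hst (hwInt s t hs hst)
          (intervalIntegrable_const) hae
      have h2 : (∫ x in s..t, (C:ℝ)) = C * (t - s) := by
        simp [intervalIntegral.integral_const, smul_eq_mul, mul_comm]
      calc (∫ x in s..t, w x) ≤ C * (t - s) := by rw [← h2]; exact h1
        _ ≤ C * (ε / (C + 1)) := by
            apply mul_le_mul_of_nonneg_left (by linarith) hCnn
        _ ≤ (C + 1) * (ε / (C + 1)) := by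
            apply mul_le_mul_of_nonneg_right (by linarith) (by positivity)
        _ = ε := by field_simp
    · -- q < ∞ case
      have hq0 : q ≠ 0 := by
        intro h; rw [h] at hq1; simp at hq1
      set g := fun x : ℝ => ‖w x‖ ^ q.toReal with hg
      have hgint : Integrable g μ := hw.integrable_norm_rpow hq0 hq
      have hqr : 1 ≤ q.toReal := by
        have := ENNReal.toReal_mono hq hq1; simpa using this
      -- tail of g is small
      have htail := tail_tendsto_aux hgint
      have hev : ∀ᶠ T in (atTop : Filter ℝ), (∫ x in Ici T, g x ∂μ) < ε / 2 :=
        htail.eventually (gt_mem_nhds (by positivity))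
      rcases (eventually_atTop.mp hev) with ⟨T₀, hT₀⟩
      set T := max T₀ 0 with hT
      refine ⟨ε / 2, by positivity, T, le_max_right _ _, fun s t hs hst hts => ?_⟩
      have hs0 : 0 ≤ s := le_trans (le_max_right _ _) hs
      -- pointwise bound w ≤ 1 + g
      have hpt : ∀ x, w x ≤ 1 + g x := by
        intro x
        have h1 : w x ≤ ‖w x‖ := le_trans (le_abs_self _) (by rw [Real.norm_eq_abs])
        rcases le_or_gt (‖w x‖) 1 with h | h
        · have : 0 ≤ g x := Real.rpow_nonneg (norm_nonneg _) _
          linarith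
        · have h2 : ‖w x‖ ≤ g x := by
            calc ‖w x‖ = ‖w x‖ ^ (1:ℝ) := (Real.rpow_one _).symm
              _ ≤ ‖w x‖ ^ q.toReal := Real.rpow_le_rpow_of_exponent_le h.le hqr
          linarith
      -- integrability of g on the interval
      have hgloc : IntegrableOn g (Ioc s t) volume := by
        have h1 : IntegrableOn g (Ioc s t) μ := hgint.integrableOn
        rwa [IntegrableOn, hres s t hs0] at h1
      have hgI : IntervalIntegrable g volume s t :=
        (intervalIntegrable_iff_integrableOn_Ioc_of_le hst).mpr hgloc
      have h1 : (∫ x in s..t, w x) ≤ ∫ x in s..t, (1 + g x) := by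
        apply intervalIntegral.integral_mono_on hst (hwInt s t hs0 hst)
          (intervalIntegrable_const.add hgI)
        intro x _; exact hpt x
      have h2 : (∫ x in s..t, (1 + g x)) = (t - s) + ∫ x in s..t, g x := by
        rw [intervalIntegral.integral_add intervalIntegrable_const hgI]
        simp [mul_comm]
      have h3 : (∫ x in s..t, g x) ≤ ∫ x in Ici s, g x ∂μ := by
        rw [intervalIntegral.integral_of_le hst]
        have : (∫ x in Ioc s t, g x) = ∫ x in Ioc s t, g x ∂μ := by
          rw [← hres s t hs0]
        rw [this]
        have hsub2 : Ioc s t ⊆ Ici s := fun x hx => le_of_lt hx.1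
        exact setIntegral_mono_set hgint.integrableOn
          (Eventually.of_forall fun x => Real.rpow_nonneg (norm_nonneg _) _)
          hsub2.eventuallyLE
      have h4 : (∫ x in Ici s, g x ∂μ) < ε / 2 := hT₀ s (le_trans (le_max_left _ _) hs)
      linarith
  -- main argument by contradiction
  by_contra hcon
  rw [Metric.tendsto_atTop] at hcon
  push_neg at hcon
  obtain ⟨ε, hε, hfreq⟩ := hcon
  obtain ⟨δ, hδ, T, hT0, hkey⟩ := key (ε / 2) (by positivity)
  -- p data
  have hp0 : p ≠ 0 := by
    intro h; rw [h] at hp1; simp at hp1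
  set pr := p.toReal with hpr
  have hpr1 : 1 ≤ pr := by
    have := ENNReal.toReal_mono hp2.ne hp1; simpa using this
  set f := fun x : ℝ => ‖u x‖ ^ pr with hf
  have hfint : Integrable f μ := hu.integrable_norm_rpow hp0 hp2.ne
  set c := (ε / 2) ^ pr * δ with hc
  have hcpos : 0 < c := mul_pos (Real.rpow_pos_of_pos (by positivity) _) hδ
  have htail := tail_tendsto_aux hfint
  have hev : ∀ᶠ S in (atTop : Filter ℝ), (∫ x in Ici S, f x ∂μ) < c :=
    htail.eventually (gt_mem_nhds hcpos)
  rcases (eventually_atTop.mp hev) with ⟨S₀, hS₀⟩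
  set S := max S₀ T with hS
  obtain ⟨t, ht, hut⟩ := hfreq (S + δ)
  have htS : S + δ ≤ t := ht
  have hST : T ≤ S := le_max_right _ _
  have ht0 : 0 ≤ t := le_trans (by linarith [le_trans hT0 hST]) htS
  have hut' : ε ≤ u t := by
    rw [Real.dist_eq, sub_zero, abs_of_nonneg (hunn t ht0)] at hut
    exact hut
  set s := t - δ with hs
  have hsS : S ≤ s := by simp only [hs]; linarith
  have hsT : T ≤ s := le_trans hST hsS
  have hs0 : 0 ≤ s := le_trans (le_trans hT0 hST) hsS
  have hst : s ≤ t := by simp only [hs]; linarith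
  -- u ≥ ε/2 on [s, t]
  have hlower : ∀ x ∈ Icc s t, ε / 2 ≤ u x := by
    intro x hx
    have hx0 : 0 ≤ x := le_trans hs0 hx.1
    have hxt : x ≤ t := hx.2
    have hFTCx := hFTC x t hx0 hxt
    have hmono : (∫ y in x..t, u' y) ≤ ∫ y in x..t, w y := by
      apply intervalIntegral.integral_mono_ae_restrict hxt (hloc x t hx0 hxt)
        (hwInt x t hx0 hxt)
      exact ae_restrict_of_ae_restrict_of_subset (fun y hy => le_trans hx0 hy.1) hle
    have hsmall : (∫ y in x..t, w y) ≤ ε / 2 :=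
      hkey x t (le_trans hsT hx.1) hxt (by simp only [hs] at hx ⊢; linarith [hx.1])
    linarith
  -- contradiction via the Lᵖ tail
  have hμIcc : (μ (Icc s t)).toReal = δ := by
    have hsub : Icc s t ∩ Ici (0:ℝ) = Icc s t :=
      inter_eq_self_of_subset_left (fun x hx => le_trans hs0 hx.1)
    rw [hμ, Measure.restrict_apply measurableSet_Icc, hsub, Real.volume_Icc]
    rw [ENNReal.toReal_ofReal (by linarith)]
    simp [hs]
  have h1 : (ε / 2) ^ pr * (μ (Icc s t)).toReal ≤ ∫ x in Icc s t, f x ∂μ := by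
    apply setIntegral_ge_of_const_le_real measurableSet_Icc
    · rw [hμ, Measure.restrict_apply measurableSet_Icc]
      exact ne_of_lt (lt_of_le_of_lt (measure_mono inter_subset_left)
        (by rw [Real.volume_Icc]; exact ENNReal.ofReal_lt_top))
    · intro x hx
      have := hlower x hx
      calc (ε / 2) ^ pr ≤ (u x) ^ pr :=
            Real.rpow_le_rpow (by positivity) this (by linarith)
        _ = f x := by
            rw [hf]; congr 1
            rw [Real.norm_eq_abs, abs_of_nonneg (hunn x (le_trans hs0 hx.1))]
    · exact hfint.integrableOn
  have h2 : (∫ x in Icc s t, f x ∂μ) ≤ ∫ x in Ici s, f x ∂μ := by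
    have hsub2 : Icc s t ⊆ Ici s := fun x hx => hx.1
    exact setIntegral_mono_set hfint.integrableOn
      (Eventually.of_forall fun x => Real.rpow_nonneg (norm_nonneg _) _)
      hsub2.eventuallyLE
  have h3 : (∫ x in Ici s, f x ∂μ) < c := hS₀ s (le_trans (le_max_left _ _) hsS)
  rw [hμIcc] at h1
  rw [hc] at h3
  linarith
end

section
/- Let Ω ⊆ ℝ^d be nonempty, closed and convex, y : [t₀,∞) → Ω and δ : [t₀,∞) → (0,∞) continuous, and let x solve x'(t) = δ(t)(y(t) − x(t)) with x(t₀) ∈ Ω. Then x(t) ∈ Ω for all t ≥ t₀. -/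
open Set

theorem stmt_3 {d : ℕ} (Ω : Set (EuclideanSpace ℝ (Fin d)))
    (hΩne : Ω.Nonempty) (hΩcl : IsClosed Ω) (hΩconv : Convex ℝ Ω)
    (t₀ : ℝ) (y : ℝ → EuclideanSpace ℝ (Fin d)) (δ : ℝ → ℝ)
    (hy : ∀ t, t₀ ≤ t → y t ∈ Ω)
    (hycont : ContinuousOn y (Ici t₀)) (hδcont : ContinuousOn δ (Ici t₀))
    (hδpos : ∀ t, t₀ ≤ t → 0 < δ t)
    (x : ℝ → EuclideanSpace ℝ (Fin d))
    (hx : ∀ t, t₀ ≤ t → HasDerivAt x (δ t • (y t - x t)) t)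
    (hx0 : x t₀ ∈ Ω) :
    ∀ t, t₀ ≤ t → x t ∈ Ω := by
  intro T hT
  set f : ℝ → ℝ := fun t => Metric.infDist (x t) Ω with hfdef
  have hxcont : ContinuousOn x (Ici t₀) := fun t ht =>
    ((hx t ht).continuousAt).continuousWithinAt
  have key : ∀ t ∈ Icc t₀ T, f t ≤ gronwallBound 0 0 0 (t - t₀) := by
    apply le_gronwallBound_of_liminf_deriv_right_le (f' := fun _ => (0 : ℝ))
    · exact (Metric.continuous_infDist_pt Ω).comp_continuousOn
        (hxcont.mono Icc_subset_Ici_self)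
    · intro t ht r hr
      have ht0 : t₀ ≤ t := ht.1
      have hδt : 0 < δ t := hδpos t ht0
      set v : EuclideanSpace ℝ (Fin d) := δ t • (y t - x t) with hv
      have hderiv : HasDerivAt x v t := hx t ht0
      obtain ⟨p, hpΩ, hp⟩ := hΩcl.exists_infDist_eq_dist hΩne (x t)
      have hslope : Filter.Tendsto (slope x t) (nhdsWithin t {t}ᶜ) (nhds v) :=
        hasDerivAt_iff_tendsto_slope.1 hderiv
      have h1 : ∀ᶠ z in nhdsWithin t (Ioi t), ‖slope x t z - v‖ < r := by
        have : Filter.Tendsto (slope x t) (nhdsWithin t (Ioi t)) (nhds v) :=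
          hslope.mono_left (nhdsWithin_mono t fun z hz => ne_of_gt hz)
        have htend : Filter.Tendsto (fun z => ‖slope x t z - v‖) (nhdsWithin t (Ioi t)) (nhds 0) := by
          simpa using (this.sub_const v).norm
        exact htend.eventually_lt_const hr
      have h2 : ∀ᶠ z in nhdsWithin t (Ioi t), z ∈ Ioo t (t + (δ t)⁻¹) :=
        Ioo_mem_nhdsGT_of_mem ⟨le_refl t, by linarith [inv_pos.2 hδt]⟩
      refine Filter.Eventually.frequently ?_
      filter_upwards [h1, h2] with z hzr hzI
      have hzt : t < z := hzI.1
      have hh : (0:ℝ) < z - t := sub_pos.2 hzt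
      set c : ℝ := (z - t) * δ t with hc
      have hc0 : 0 ≤ c := le_of_lt (mul_pos hh hδt)
      have hc1 : c ≤ 1 := by
        have : z - t ≤ (δ t)⁻¹ := by linarith [hzI.2]
        calc c ≤ (δ t)⁻¹ * δ t := mul_le_mul_of_nonneg_right this hδt.le
        _ = 1 := inv_mul_cancel₀ (ne_of_gt hδt)
      have hqΩ : (1 - c) • p + c • y t ∈ Ω :=
        hΩconv hpΩ (hy t ht0) (by linarith) hc0 (by ring)
      set q : EuclideanSpace ℝ (Fin d) := (1 - c) • p + c • y t with hq
      have hfz : f z ≤ dist (x z) q := Metric.infDist_le_dist_of_mem hqΩ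
      set E : EuclideanSpace ℝ (Fin d) := x z - x t - (z - t) • v with hE
      have hdecomp : x z - q = E + (1 - c) • (x t - p) := by
        rw [hE, hq, hv, hc]
        simp only [smul_sub, sub_smul, smul_smul, one_smul]
        abel
      have h3 : (z - t) • (slope x t z - v) = E := by
        rw [slope_def_module, hE]
        match_scalars <;> field_simp
      have hEnorm : ‖E‖ = (z - t) * ‖slope x t z - v‖ := by
        rw [← h3, norm_smul, Real.norm_eq_abs, abs_of_pos hh]
      have hft : f t = ‖x t - p‖ := by
        simp only [hfdef]; rw [hp, dist_eq_norm]
      have hdist : dist (x z) q ≤ ‖E‖ + f t := by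
        rw [dist_eq_norm, hdecomp]
        refine le_trans (norm_add_le _ _) ?_
        gcongr
        rw [norm_smul, Real.norm_eq_abs, abs_of_nonneg (by linarith), hft]
        nlinarith [norm_nonneg (x t - p)]
      have hfzft : f z - f t ≤ (z - t) * ‖slope x t z - v‖ := by
        have := hfz.trans hdist
        rw [hEnorm] at this
        linarith
      have : (z - t)⁻¹ * (f z - f t) ≤ ‖slope x t z - v‖ := by
        rw [← inv_mul_cancel_left₀ (ne_of_gt hh) ‖slope x t z - v‖, ← mul_assoc] at hfzft
        calc (z - t)⁻¹ * (f z - f t) ≤ (z - t)⁻¹ * ((z - t) * ‖slope x t z - v‖) := by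
              exact mul_le_mul_of_nonneg_left (by linarith [hfzft]) (le_of_lt (inv_pos.2 hh))
        _ = ‖slope x t z - v‖ := by field_simp
      linarith [hfzft, hzr, this]
    · simp [hfdef, Metric.infDist_zero_of_mem hx0]
    · intro t _; simp
  have hfT : f T ≤ 0 := by
    have := key T ⟨hT, le_refl T⟩
    rwa [gronwallBound_ε0_δ0] at this
  have : f T = 0 := le_antisymm hfT Metric.infDist_nonneg
  exact (hΩcl.mem_iff_infDist_zero hΩne).2 this
end

section
/- Let α₁, δ : [t₀,∞) → (0,∞) be locally absolutely continuous with δ(t) < (1/4)(α₁(t)² + 2α₁'(t)) for all t ≥ t₀. Then the Riccati initial value problem γ'(t) + α₁(t)γ(t) = γ(t)² + δ(t), γ(t₀) = (1/4)α₁(t₀), admits a solution γ defined on all of [t₀,∞), and moreover γ(t) < (1/2)α₁(t) and γ(t) > 0 for all t ≥ t₀. -/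
open Set Filter Topology

private lemma ev_lt_of_deriv_pos {f : ℝ → ℝ} {x D : ℝ} (hf : HasDerivAt f D x) (hD : 0 < D) :
    ∀ᶠ t in 𝓝[<] x, f t < f x := by
  have h := hasDerivAt_iff_tendsto_slope.mp hf
  have h2 : ∀ᶠ t in 𝓝[≠] x, 0 < slope f x t := h.eventually (eventually_gt_nhds hD)
  have h3 : ∀ᶠ t in 𝓝[<] x, 0 < slope f x t :=
    nhdsWithin_mono x (fun y hy => ne_of_lt hy) h2
  filter_upwards [h3, self_mem_nhdsWithin] with t h4 h5
  have hne : t - x < 0 := sub_neg.mpr h5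
  have h6 : f t - f x = slope f x t * (t - x) := by
    rw [slope_def_field, div_mul_cancel₀ _ (sub_ne_zero.mpr (ne_of_lt h5))]
  have h7 : slope f x t * (t - x) < 0 := mul_neg_of_pos_of_neg h4 hne
  linarith

private lemma ev_gt_of_deriv_neg {f : ℝ → ℝ} {x D : ℝ} (hf : HasDerivAt f D x) (hD : D < 0) :
    ∀ᶠ t in 𝓝[<] x, f x < f t := by
  have := ev_lt_of_deriv_pos hf.neg (by linarith : (0:ℝ) < -D)
  filter_upwards [this] with t ht; simp only [Pi.neg_apply] at ht; linarith

private lemma clamp_lip (c x y : ℝ) : |max 0 (min x c) - max 0 (min y c)| ≤ |x - y| := by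
  have h1 : |max 0 (min x c) - max 0 (min y c)| ≤ |min x c - min y c| := by
    rw [max_comm 0 (min x c), max_comm 0 (min y c)]
    exact abs_max_sub_max_le_abs _ _ _
  have h2 : |min x c - min y c| ≤ max |x - y| |c - c| := abs_min_sub_min_le_max x c y c
  simpa using h1.trans h2

/-- Global existence of the Riccati problem `γ' + α₁ γ = γ² + δ`, `γ(t₀) = α₁(t₀)/4`,
together with the bounds `0 < γ(t) < α₁(t)/2`, under `δ < (α₁² + 2α₁')/4`. -/
theorem stmt_5 (t₀ : ℝ) (α₁ α₁' δ : ℝ → ℝ)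
    (hα₁pos : ∀ t, t₀ ≤ t → 0 < α₁ t) (hδpos : ∀ t, t₀ ≤ t → 0 < δ t)
    (hα₁deriv : ∀ t, t₀ ≤ t → HasDerivAt α₁ (α₁' t) t)
    (hα₁'cont : ContinuousOn α₁' (Ici t₀)) (hδcont : ContinuousOn δ (Ici t₀))
    (hcond : ∀ t, t₀ ≤ t → δ t < (1/4) * (α₁ t ^ 2 + 2 * α₁' t)) :
    ∃ γ : ℝ → ℝ, γ t₀ = (1/4) * α₁ t₀ ∧
      (∀ t, t₀ ≤ t → HasDerivAt γ (γ t ^ 2 + δ t - α₁ t * γ t) t) ∧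
      (∀ t, t₀ ≤ t → 0 < γ t ∧ γ t < (1/2) * α₁ t) := by
  -- truncated coefficients, defined on all of ℝ
  set a : ℝ → ℝ := fun t => α₁ (max t t₀) with ha_def
  set d : ℝ → ℝ := fun t => δ (max t t₀) with hd_def
  have ha_eq : ∀ t, t₀ ≤ t → a t = α₁ t := fun t ht => by simp [ha_def, max_eq_left ht]
  have hd_eq : ∀ t, t₀ ≤ t → d t = δ t := fun t ht => by simp [hd_def, max_eq_left ht]
  have hapos : ∀ t, 0 < a t := fun t => hα₁pos _ (le_max_right _ _)
  have hdpos : ∀ t, 0 < d t := fun t => hδpos _ (le_max_right _ _)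
  have hmax : Continuous (fun s : ℝ => max s t₀) := continuous_id.max continuous_const
  have hacont : Continuous a := by
    rw [continuous_iff_continuousAt]
    intro t
    have h1 : ContinuousAt (fun s : ℝ => max s t₀) t := hmax.continuousAt
    have h2 : ContinuousAt α₁ (max t t₀) := (hα₁deriv _ (le_max_right _ _)).continuousAt
    exact ContinuousAt.comp h2 h1
  have hdcont : Continuous d :=
    hδcont.comp_continuous hmax (fun t => mem_Ici.mpr (le_max_right _ _))
  -- truncated vector field
  set π : ℝ → ℝ → ℝ := fun t x => max 0 (min x (a t / 2)) with hπ_def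
  set v : ℝ → ℝ → ℝ := fun t x => (π t x) ^ 2 + d t - a t * π t x with hv_def
  have hπ0 : ∀ t x, 0 ≤ π t x := fun t x => le_max_left _ _
  have hπle : ∀ t x, π t x ≤ a t / 2 := fun t x =>
    max_le (by linarith [hapos t]) (min_le_right _ _)
  have hπeq : ∀ t x, 0 ≤ x → x ≤ a t / 2 → π t x = x := fun t x h1 h2 => by
    simp [hπ_def, min_eq_left h2, max_eq_right h1]
  have hπcont : Continuous (fun p : ℝ × ℝ => π p.1 p.2) :=
    continuous_const.max (continuous_snd.min ((hacont.comp continuous_fst).div_const 2))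
  have hvcont : Continuous (fun p : ℝ × ℝ => v p.1 p.2) :=
    ((hπcont.pow 2).add (hdcont.comp continuous_fst)).sub
      ((hacont.comp continuous_fst).mul hπcont)
  have hlip : ∀ t x y, |v t x - v t y| ≤ a t * |x - y| := by
    intro t x y
    have h1 : |π t x - π t y| ≤ |x - y| := clamp_lip _ _ _
    have h2 : v t x - v t y = (π t x - π t y) * (π t x + π t y - a t) := by
      simp only [hv_def]; ring
    have h3 : |π t x + π t y - a t| ≤ a t := by
      rw [abs_le]
      have := hapos t
      constructor
      · have := hπ0 t x; have := hπ0 t y; linarith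
      · have := hπle t x; have := hπle t y; linarith
    calc |v t x - v t y| = |π t x - π t y| * |π t x + π t y - a t| := by rw [h2, abs_mul]
      _ ≤ |x - y| * a t := mul_le_mul h1 h3 (abs_nonneg _) (abs_nonneg _)
      _ = a t * |x - y| := mul_comm _ _
  have hvbound : ∀ t x, |v t x| ≤ a t ^ 2 + d t := by
    intro t x
    have h0 := hπ0 t x
    have h1 := hπle t x
    have h2 := hapos t
    have h3 := hdpos t
    rw [abs_le]
    simp only [hv_def]
    constructor <;> nlinarith
  -- solutions on every interval [t₀-1, t₀+n+1]
  have hexists : ∀ n : ℕ, ∃ f : ℝ → ℝ, f t₀ = (1/4) * α₁ t₀ ∧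
      ∀ t ∈ Icc (t₀-1) (t₀+n+1), HasDerivWithinAt f (v t (f t)) (Icc (t₀-1) (t₀+n+1)) t := by
    intro n
    obtain ⟨M, hM⟩ : ∃ M, ∀ t ∈ Icc (t₀-1) (t₀+n+1), a t ^ 2 + d t ≤ M := by
      obtain ⟨M, hM⟩ := isCompact_Icc.exists_bound_of_continuousOn
        (((hacont.pow 2).add hdcont).continuousOn (s := Icc (t₀-1) (t₀+n+1)))
      exact ⟨M, fun t ht => (le_abs_self _).trans (by simpa [Real.norm_eq_abs] using hM t ht)⟩
    obtain ⟨K, hK⟩ : ∃ K, ∀ t ∈ Icc (t₀-1) (t₀+n+1), a t ≤ K := by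
      obtain ⟨K, hK⟩ := isCompact_Icc.exists_bound_of_continuousOn
        (hacont.continuousOn (s := Icc (t₀-1) (t₀+n+1)))
      exact ⟨K, fun t ht => (le_abs_self _).trans (by simpa [Real.norm_eq_abs] using hK t ht)⟩
    have hn : (0:ℝ) ≤ n := Nat.cast_nonneg n
    have ht₀mem : t₀ ∈ Icc (t₀-1) (t₀+n+1) := ⟨by linarith, by linarith⟩
    have hM0 : 0 ≤ M := le_trans (by nlinarith [hapos t₀, hdpos t₀, sq_nonneg (a t₀)]) (hM t₀ ht₀mem)
    have hpl : IsPicardLindelof v (tmin := t₀-1) (tmax := t₀+n+1) ⟨t₀, ht₀mem⟩ ((1/4) * α₁ t₀)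
        (M * max ((t₀+n+1) - t₀) (t₀ - (t₀-1))).toNNReal 0 M.toNNReal K.toNNReal := by
      refine ⟨?_, ?_, ?_, ?_⟩
      · intro t ht
        apply LipschitzOnWith.of_dist_le_mul
        intro x _ y _
        rw [Real.dist_eq, Real.dist_eq]
        calc |v t x - v t y| ≤ a t * |x - y| := hlip t x y
          _ ≤ ↑K.toNNReal * |x - y| := by
              apply mul_le_mul_of_nonneg_right _ (abs_nonneg _)
              rw [Real.coe_toNNReal']
              exact le_max_of_le_left (hK t ht)
      · intro x _
        exact (hvcont.comp (continuous_id.prodMk continuous_const)).continuousOn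
      · intro t ht x _
        rw [Real.norm_eq_abs]
        exact ((hvbound t x).trans (hM t ht)).trans (Real.le_coe_toNNReal M)
      · simp only [tsub_zero, Real.coe_toNNReal _ hM0, NNReal.coe_zero, sub_zero]
        exact Real.le_coe_toNNReal _
    exact hpl.exists_eq_forall_mem_Icc_hasDerivWithinAt₀
  choose f hf0 hfd using hexists
  -- gluing of the solutions on growing intervals
  have hglue : ∀ n m : ℕ, ∀ t ∈ Icc (t₀-1) (t₀ + (min n m : ℕ) + 1), f n t = f m t := by
    intro n m
    have hkn : ((min n m : ℕ):ℝ) ≤ n := Nat.cast_le.mpr (min_le_left n m)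
    have hkm : ((min n m : ℕ):ℝ) ≤ m := Nat.cast_le.mpr (min_le_right n m)
    have hk0 : (0:ℝ) ≤ ((min n m : ℕ):ℝ) := Nat.cast_nonneg _
    set B : ℝ := t₀ + (min n m : ℕ) + 1 with hB_def
    set w : ℝ → ℝ → ℝ := fun t x => v (max (min t B) (t₀-1)) x with hw_def
    obtain ⟨K, hK⟩ : ∃ K, ∀ t ∈ Icc (t₀-1) B, a t ≤ K := by
      obtain ⟨K, hK⟩ := isCompact_Icc.exists_bound_of_continuousOn
        (hacont.continuousOn (s := Icc (t₀-1) B))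
      exact ⟨K, fun t ht => (le_abs_self _).trans (by simpa [Real.norm_eq_abs] using hK t ht)⟩
    have hcl : ∀ t : ℝ, max (min t B) (t₀-1) ∈ Icc (t₀-1) B := by
      intro t
      exact ⟨le_max_right _ _, max_le (min_le_right _ _) (by linarith)⟩
    have hlipw : ∀ t : ℝ, LipschitzOnWith K.toNNReal (w t) univ := by
      intro t
      apply LipschitzOnWith.of_dist_le_mul
      intro x _ y _
      rw [Real.dist_eq, Real.dist_eq]
      calc |w t x - w t y| ≤ a (max (min t B) (t₀-1)) * |x - y| := hlip _ x y
        _ ≤ ↑K.toNNReal * |x - y| := by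
            apply mul_le_mul_of_nonneg_right _ (abs_nonneg _)
            rw [Real.coe_toNNReal']
            exact le_max_of_le_left (hK _ (hcl t))
    have hcont : ∀ j : ℕ, ((min n m : ℕ):ℝ) ≤ j → ContinuousOn (f j) (Icc (t₀-1) B) := by
      intro j hj
      have hsub : Icc (t₀-1) B ⊆ Icc (t₀-1) (t₀+j+1) :=
        Icc_subset_Icc le_rfl (by simp only [hB_def]; linarith)
      exact fun t ht => ((hfd j t (hsub ht)).continuousWithinAt).mono hsub
    have hder : ∀ j : ℕ, ((min n m : ℕ):ℝ) ≤ j →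
        ∀ t ∈ Ioo (t₀-1) B, HasDerivAt (f j) (w t (f j t)) t := by
      intro j hj t ht
      have h2 : t < t₀ + j + 1 := by
        have : t < B := ht.2
        simp only [hB_def] at this
        linarith
      have hIcc : Icc (t₀-1) (t₀+j+1) ∈ 𝓝 t := Icc_mem_nhds ht.1 h2
      have h3 : HasDerivAt (f j) (v t (f j t)) t :=
        (hfd j t (mem_of_mem_nhds hIcc)).hasDerivAt hIcc
      have h4 : w t (f j t) = v t (f j t) := by
        simp only [hw_def]
        rw [min_eq_left ht.2.le, max_eq_left (by linarith [ht.1])]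
      rw [h4]
      exact h3
    intro t ht
    have ht₀Ioo : t₀ ∈ Ioo (t₀-1) B := ⟨by linarith, by simp only [hB_def]; linarith⟩
    exact ODE_solution_unique_of_mem_Icc (v := w) (s := fun _ => univ) (fun t _ => hlipw t) ht₀Ioo
      (hcont n hkn) (hder n hkn) (fun t _ => trivial) (hcont m hkm)
      (hder m hkm) (fun t _ => trivial) (by rw [hf0 n, hf0 m]) ht
  -- the global solution
  set γ : ℝ → ℝ := fun t => f ⌈t - t₀⌉₊ t with hγ_def
  have hγ0 : γ t₀ = (1/4) * α₁ t₀ := by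
    simp only [hγ_def]
    rw [show ⌈t₀ - t₀⌉₊ = 0 by simp]
    exact hf0 0
  have hub : ∀ s : ℝ, s ≤ t₀ + (⌈s - t₀⌉₊ : ℝ) := fun s => by
    linarith [Nat.le_ceil (s - t₀)]
  have hγeq : ∀ (n : ℕ) (s : ℝ), t₀ - 1 < s → s < t₀ + n + 1 → γ s = f n s := by
    intro n s h1 h2
    have h3 := hub s
    have hmin : ((min ⌈s - t₀⌉₊ n : ℕ):ℝ) = min (⌈s - t₀⌉₊ : ℝ) (n : ℝ) := by push_cast; try rfl
    refine hglue ⌈s - t₀⌉₊ n s ⟨h1.le, ?_⟩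
    rw [hmin]
    rcases le_total (⌈s - t₀⌉₊ : ℝ) (n : ℝ) with h | h
    · rw [min_eq_left h]; linarith
    · rw [min_eq_right h]; linarith
  have hderivγ : ∀ t : ℝ, t₀ - 1 < t → HasDerivAt γ (v t (γ t)) t := by
    intro t ht
    have h2 : t < t₀ + (⌈t - t₀⌉₊ : ℝ) + 1 := by linarith [hub t]
    have hIcc : Icc (t₀-1) (t₀+(⌈t - t₀⌉₊ : ℝ)+1) ∈ 𝓝 t := Icc_mem_nhds ht h2
    have h3 : HasDerivAt (f ⌈t - t₀⌉₊) (v t (f ⌈t - t₀⌉₊ t)) t :=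
      (hfd _ t (mem_of_mem_nhds hIcc)).hasDerivAt hIcc
    have hev : γ =ᶠ[𝓝 t] f ⌈t - t₀⌉₊ := by
      filter_upwards [Ioo_mem_nhds ht h2] with s hs
      exact hγeq _ s hs.1 hs.2
    have h4 : γ t = f ⌈t - t₀⌉₊ t := hγeq _ t ht h2
    rw [← h4] at h3
    exact h3.congr_of_eventuallyEq hev
  -- invariant region 0 < γ < a/2
  have hreg : ∀ t, t₀ ≤ t → 0 < γ t ∧ γ t < a t / 2 := by
    intro t ht
    by_contra hbad
    set Bad : Set ℝ := {s | t₀ ≤ s ∧ ¬(0 < γ s ∧ γ s < a s / 2)} with hBad_def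
    have hne : Bad.Nonempty := ⟨t, ht, hbad⟩
    have hbdd : BddBelow Bad := ⟨t₀, fun b hb => hb.1⟩
    set t₁ := sInf Bad with ht₁_def
    have ht₁0 : t₀ ≤ t₁ := le_csInf hne (fun b hb => hb.1)
    have hP0 : 0 < γ t₀ ∧ γ t₀ < a t₀ / 2 := by
      rw [hγ0, ha_eq t₀ le_rfl]
      have := hα₁pos t₀ le_rfl
      constructor <;> linarith
    have hcγ : ∀ s, t₀ ≤ s → ContinuousAt γ s := fun s hs =>
      (hderivγ s (by linarith)).continuousAt
    have hbefore : ∀ s, t₀ ≤ s → s < t₁ → 0 < γ s ∧ γ s < a s / 2 := by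
      intro s hs1 hs2
      by_contra hb
      exact absurd (csInf_le hbdd ⟨hs1, hb⟩) (not_le.mpr hs2)
    have hnotP : ¬(0 < γ t₁ ∧ γ t₁ < a t₁ / 2) := by
      intro hP
      have ev1 : ∀ᶠ s in 𝓝 t₁, 0 < γ s :=
        ((hcγ t₁ ht₁0).tendsto).eventually (eventually_gt_nhds hP.1)
      have hg2 : ContinuousAt (fun s => a s / 2 - γ s) t₁ :=
        ((hacont.continuousAt).div_const 2).sub (hcγ t₁ ht₁0)
      have ev2 : ∀ᶠ s in 𝓝 t₁, 0 < a s / 2 - γ s :=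
        hg2.tendsto.eventually (eventually_gt_nhds (by linarith [hP.2]))
      obtain ⟨ε, hε, hball⟩ := Metric.eventually_nhds_iff_ball.mp (ev1.and ev2)
      have hlb : ∀ b ∈ Bad, t₁ + ε ≤ b := by
        intro b hb
        by_contra hlt
        push_neg at hlt
        have hb1 : t₁ ≤ b := csInf_le hbdd hb
        have hmem : b ∈ Metric.ball t₁ ε := by
          rw [Metric.mem_ball, Real.dist_eq, abs_of_nonneg (by linarith)]
          linarith
        obtain ⟨h1, h2⟩ := hball b hmem
        exact hb.2 ⟨h1, by linarith⟩
      have := le_csInf hne hlb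
      linarith
    have ht₁pos : t₀ < t₁ := lt_of_le_of_ne ht₁0 (fun h => hnotP (h ▸ hP0))
    haveI hNB : (𝓝[<] t₁).NeBot := nhdsLT_neBot t₁
    have hIoomem : Ioo t₀ t₁ ∈ 𝓝[<] t₁ := Ioo_mem_nhdsLT_of_mem ⟨ht₁pos, le_rfl⟩
    have htends : Tendsto γ (𝓝[<] t₁) (𝓝 (γ t₁)) :=
      ((hcγ t₁ ht₁0).tendsto).mono_left nhdsWithin_le_nhds
    have hγ1 : 0 ≤ γ t₁ := ge_of_tendsto htends (by
      filter_upwards [hIoomem] with s hs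
      exact (hbefore s hs.1.le hs.2).1.le)
    have hγ2 : γ t₁ ≤ a t₁ / 2 := by
      have htends2 : Tendsto (fun s => a s / 2 - γ s) (𝓝[<] t₁) (𝓝 (a t₁ / 2 - γ t₁)) :=
        (((hacont.continuousAt).div_const 2).sub (hcγ t₁ ht₁0)).tendsto.mono_left
          nhdsWithin_le_nhds
      have h0 : 0 ≤ a t₁ / 2 - γ t₁ := ge_of_tendsto htends2 (by
        filter_upwards [hIoomem] with s hs
        linarith [(hbefore s hs.1.le hs.2).2])
      linarith
    have hcase : γ t₁ = 0 ∨ γ t₁ = a t₁ / 2 := by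
      rcases eq_or_lt_of_le hγ1 with h | h
      · exact Or.inl h.symm
      rcases eq_or_lt_of_le hγ2 with h2 | h2
      · exact Or.inr h2
      exact absurd ⟨h, h2⟩ hnotP
    rcases hcase with hz | hz
    · -- lower barrier γ = 0
      have hva : v t₁ (γ t₁) = d t₁ := by
        rw [hz]
        simp only [hv_def, hπ_def]
        rw [min_eq_left (by linarith [hapos t₁]), max_self]
        ring
      have hD : HasDerivAt γ (d t₁) t₁ := by
        have := hderivγ t₁ (by linarith)
        rwa [hva] at this
      have hev := ev_lt_of_deriv_pos hD (hdpos t₁)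
      rw [hz] at hev
      obtain ⟨s, hs1, hs2⟩ := (hev.and hIoomem).exists
      have := (hbefore s hs2.1.le hs2.2).1
      linarith
    · -- upper barrier γ = a/2
      have haderiv : HasDerivAt a (α₁' t₁) t₁ := by
        apply (hα₁deriv t₁ ht₁0).congr_of_eventuallyEq
        filter_upwards [Ioi_mem_nhds ht₁pos] with s hs
        simp [ha_def, max_eq_left (mem_Ioi.mp hs).le]
      have hva : v t₁ (γ t₁) = d t₁ - a t₁ ^ 2 / 4 := by
        rw [hz]
        simp only [hv_def, hπ_def]
        rw [min_self, max_eq_right (by linarith [hapos t₁])]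
        ring
      have hderh : HasDerivAt (fun s => γ s - a s / 2) (v t₁ (γ t₁) - α₁' t₁ / 2) t₁ :=
        (hderivγ t₁ (by linarith)).sub (haderiv.div_const 2)
      have hDneg : v t₁ (γ t₁) - α₁' t₁ / 2 < 0 := by
        rw [hva, hd_eq t₁ ht₁0, ha_eq t₁ ht₁0]
        have := hcond t₁ ht₁0
        nlinarith
      have hev := ev_gt_of_deriv_neg hderh hDneg
      obtain ⟨s, hs1, hs2⟩ := (hev.and hIoomem).exists
      have h5 := (hbefore s hs2.1.le hs2.2).2
      have h6 : γ t₁ - a t₁ / 2 = 0 := by rw [hz]; ring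
      rw [h6] at hs1
      linarith
  -- final assembly
  refine ⟨γ, hγ0, ?_, ?_⟩
  · intro t ht
    have hr := hreg t ht
    have h1 : π t (γ t) = γ t := hπeq t (γ t) hr.1.le (by linarith [hr.2])
    have h2 : v t (γ t) = γ t ^ 2 + δ t - α₁ t * γ t := by
      simp only [hv_def]
      rw [h1, hd_eq t ht, ha_eq t ht]
    have h3 := hderivγ t (by linarith)
    rwa [h2] at h3
  · intro t ht
    have hr := hreg t ht
    rw [ha_eq t ht] at hr
    exact ⟨hr.1, by linarith [hr.2]⟩
end

section
/- Let Ω ⊆ ℝ^d be nonempty, closed and convex, y : [t₀,∞) → Ω, and α₁, δ : [t₀,∞) → (0,∞) locally absolutely continuous with δ(t) < (1/4)(α₁(t)² + 2α₁'(t)) for all t ≥ t₀. If x solves x''(t) + α₁(t)x'(t) = δ(t)(y(t) − x(t)) with x(t₀) = x₀ ∈ Ω and x'(t₀) = (1/4)α₁(t₀)(x₁ − x₀) for some x₁ ∈ Ω, then x(t) ∈ Ω for all t ≥ t₀. -/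
open Set Filter Topology


lemma slope_nonneg' {F : ℝ → ℝ} {D τ t₀ : ℝ} (hD : HasDerivAt F D τ) (ht : t₀ < τ)
    (hneg : ∀ t ∈ Ico t₀ τ, F t < 0) (h0 : F τ = 0) : 0 ≤ D := by
  have h1 : Tendsto (slope F τ) (𝓝[<] τ) (𝓝 D) :=
    (hasDerivAt_iff_tendsto_slope.mp hD).mono_left
      (nhdsWithin_mono _ (fun z hz => ne_of_lt hz))
  refine ge_of_tendsto h1 ?_
  filter_upwards [Ioo_mem_nhdsLT_of_mem (show τ ∈ Ioc t₀ τ from ⟨ht, le_refl τ⟩)] with s hs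
  have h2 : F s < 0 := hneg s ⟨hs.1.le, hs.2⟩
  have h3 : s - τ < 0 := by linarith [hs.2]
  rw [slope_def_field]
  rw [div_nonneg_iff]; exact Or.inr ⟨by linarith, h3.le⟩

lemma barrier {t₀ t₁ : ℝ} {γ a b ψ χ ψd χd : ℝ → ℝ}
    (hγ : ∀ t ∈ Icc t₀ t₁, 0 ≤ γ t) (ha : ∀ t ∈ Icc t₀ t₁, 0 ≤ a t)
    (hb : ∀ t ∈ Icc t₀ t₁, 0 ≤ b t)
    (hψ : ∀ t ∈ Icc t₀ t₁, HasDerivAt ψ (ψd t) t)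
    (hχ : ∀ t ∈ Icc t₀ t₁, HasDerivAt χ (χd t) t)
    (hψd : ∀ t ∈ Icc t₀ t₁, ψd t = γ t * (χ t - ψ t))
    (hχd : ∀ t ∈ Icc t₀ t₁, χd t ≤ b t * ψ t - (a t + b t) * χ t)
    (h0ψ : ψ t₀ ≤ 0) (h0χ : χ t₀ ≤ 0) :
    ∀ t ∈ Icc t₀ t₁, ψ t ≤ 0 ∧ χ t ≤ 0 := by
  have key : ∀ ε > (0:ℝ), ∀ t ∈ Icc t₀ t₁, max (ψ t) (χ t) < ε * Real.exp (t - t₀) := by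
    intro ε hε
    by_contra hcon
    push_neg at hcon
    obtain ⟨tb, htb, htb2⟩ := hcon
    set g : ℝ → ℝ := fun t => max (ψ t) (χ t) - ε * Real.exp (t - t₀) with hg
    have hgc : ContinuousOn g (Icc t₀ t₁) := by
      intro s hs
      have hca : ContinuousAt g s :=
        (((hψ s hs).continuousAt.max (hχ s hs).continuousAt).sub
          ((continuous_const.mul
            (Real.continuous_exp.comp (continuous_id.sub continuous_const))).continuousAt))
      exact hca.continuousWithinAt
    set S : Set ℝ := Icc t₀ t₁ ∩ g ⁻¹' (Ici 0) with hS
    have hScl : IsClosed S := hgc.preimage_isClosed_of_isClosed isClosed_Icc isClosed_Ici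
    have hSne : S.Nonempty := ⟨tb, htb, by simpa [hg] using htb2⟩
    have hSbd : BddBelow S := ⟨t₀, fun s hs => hs.1.1⟩
    set τ := sInf S with hτ
    have hτS : τ ∈ S := hScl.csInf_mem hSne hSbd
    have ht₀ : t₀ ∈ Icc t₀ t₁ := ⟨le_refl _, hτS.1.1.trans hτS.1.2⟩
    have hgt₀ : g t₀ < 0 := by
      have : max (ψ t₀) (χ t₀) ≤ 0 := max_le h0ψ h0χ
      have : ε * Real.exp (t₀ - t₀) = ε := by simp
      simp only [hg]
      nlinarith [Real.exp_pos (t₀ - t₀), max_le h0ψ h0χ, this]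
    have hτgt : t₀ < τ := by
      rcases lt_or_eq_of_le hτS.1.1 with h | h
      · exact h
      · exfalso; have := hτS.2; rw [← h] at this; simp at this; linarith
    have hlt : ∀ s ∈ Ico t₀ τ, g s < 0 := by
      intro s hs
      by_contra hc
      push_neg at hc
      have hsS : s ∈ S := ⟨⟨hs.1, hs.2.le.trans hτS.1.2⟩, hc⟩
      exact absurd (csInf_le hSbd hsS) (not_le.mpr hs.2)
    have hgτ : g τ = 0 := by
      refine le_antisymm ?_ hτS.2
      have hcw : ContinuousWithinAt g (Ico t₀ τ) τ :=
        (hgc τ hτS.1).mono (fun s hs => ⟨hs.1, hs.2.le.trans hτS.1.2⟩)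
      have hne : (𝓝[Ico t₀ τ] τ).NeBot := by
        rw [← mem_closure_iff_nhdsWithin_neBot, closure_Ico (ne_of_lt hτgt)]
        exact ⟨hτgt.le, le_refl _⟩
      exact le_of_tendsto hcw (eventually_nhdsWithin_of_forall (fun s hs => (hlt s hs).le))
    -- case split on the max
    have hτIcc := hτS.1
    have hE : 0 < ε * Real.exp (τ - t₀) := by positivity
    rcases max_cases (ψ τ) (χ τ) with ⟨hmax, hle⟩ | ⟨hmax, hle⟩
    · -- ψ τ = ε * exp
      have hψτ : ψ τ = ε * Real.exp (τ - t₀) := by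
        have := hgτ; simp only [hg, hmax] at this; linarith
      have hF : HasDerivAt (fun s => ψ s - ε * Real.exp (s - t₀))
          (ψd τ - ε * Real.exp (τ - t₀)) τ := by
        have h2 : HasDerivAt (fun s => ε * Real.exp (s - t₀)) (ε * Real.exp (τ - t₀)) τ := by
          have := ((Real.hasDerivAt_exp (τ - t₀)).comp τ
            ((hasDerivAt_id τ).sub_const t₀)).const_mul ε
          simpa using this
        exact (hψ τ hτIcc).sub h2
      have hD := slope_nonneg' hF hτgt (fun s hs => by
          have := hlt s hs
          simp only [hg] at this
          have : ψ s ≤ max (ψ s) (χ s) := le_max_left _ _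
          nlinarith [hlt s hs, le_max_left (ψ s) (χ s)])
        (by simp [hψτ])
      have hψd' : ψd τ ≤ 0 := by
        rw [hψd τ hτIcc]
        have h1 : χ τ - ψ τ ≤ 0 := by linarith
        exact mul_nonpos_of_nonneg_of_nonpos (hγ τ hτIcc) h1
      linarith
    · -- χ τ = ε * exp
      have hχτ : χ τ = ε * Real.exp (τ - t₀) := by
        have := hgτ; simp only [hg, hmax] at this; linarith
      have hF : HasDerivAt (fun s => χ s - ε * Real.exp (s - t₀))
          (χd τ - ε * Real.exp (τ - t₀)) τ := by
        have h2 : HasDerivAt (fun s => ε * Real.exp (s - t₀)) (ε * Real.exp (τ - t₀)) τ := by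
          have := ((Real.hasDerivAt_exp (τ - t₀)).comp τ
            ((hasDerivAt_id τ).sub_const t₀)).const_mul ε
          simpa using this
        exact (hχ τ hτIcc).sub h2
      have hD := slope_nonneg' hF hτgt (fun s hs => by
          have := hlt s hs
          simp only [hg] at this
          nlinarith [le_max_right (ψ s) (χ s)])
        (by simp [hχτ])
      have hχd' : χd τ ≤ 0 := by
        have h1 := hχd τ hτIcc
        have h2 : b τ * ψ τ ≤ b τ * χ τ := mul_le_mul_of_nonneg_left hle.le (hb τ hτIcc)
        have h3 : 0 ≤ a τ * χ τ := mul_nonneg (ha τ hτIcc) (by rw [hχτ]; positivity)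
        nlinarith
      linarith
  intro t ht
  constructor
  · by_contra hc
    push_neg at hc
    have hE : 0 < Real.exp (t - t₀) := Real.exp_pos _
    have := key (ψ t / (2 * Real.exp (t - t₀))) (by positivity) t ht
    have h3 : ψ t / (2 * Real.exp (t - t₀)) * Real.exp (t - t₀) = ψ t / 2 := by
      field_simp
    rw [h3] at this
    have h2 : ψ t ≤ max (ψ t) (χ t) := le_max_left _ _
    linarith
  · by_contra hc
    push_neg at hc
    have hE : 0 < Real.exp (t - t₀) := Real.exp_pos _
    have := key (χ t / (2 * Real.exp (t - t₀))) (by positivity) t ht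
    have h3 : χ t / (2 * Real.exp (t - t₀)) * Real.exp (t - t₀) = χ t / 2 := by
      field_simp
    rw [h3] at this
    have h2 : χ t ≤ max (ψ t) (χ t) := le_max_right _ _
    linarith


theorem stmt_7 {d : ℕ} (Ω : Set (EuclideanSpace ℝ (Fin d)))
    (hΩne : Ω.Nonempty) (hΩcl : IsClosed Ω) (hΩconv : Convex ℝ Ω)
    (t₀ : ℝ) (y : ℝ → EuclideanSpace ℝ (Fin d)) (α₁ α₁' δ : ℝ → ℝ)
    (hy : ∀ t, t₀ ≤ t → y t ∈ Ω) (hycont : ContinuousOn y (Ici t₀))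
    (hα₁pos : ∀ t, t₀ ≤ t → 0 < α₁ t) (hδpos : ∀ t, t₀ ≤ t → 0 < δ t)
    (hα₁deriv : ∀ t, t₀ ≤ t → HasDerivAt α₁ (α₁' t) t)
    (hα₁'cont : ContinuousOn α₁' (Ici t₀)) (hδcont : ContinuousOn δ (Ici t₀))
    (hcond : ∀ t, t₀ ≤ t → δ t < (1/4) * (α₁ t ^ 2 + 2 * α₁' t))
    (x x' : ℝ → EuclideanSpace ℝ (Fin d)) (x₀ x₁ : EuclideanSpace ℝ (Fin d))
    (hx₀ : x₀ ∈ Ω) (hx₁ : x₁ ∈ Ω)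
    (hxderiv : ∀ t, t₀ ≤ t → HasDerivAt x (x' t) t)
    (hode : ∀ t, t₀ ≤ t → HasDerivAt x' (δ t • (y t - x t) - α₁ t • x' t) t)
    (hinit : x t₀ = x₀) (hinit' : x' t₀ = ((1/4) * α₁ t₀) • (x₁ - x₀)) :
    ∀ t, t₀ ≤ t → x t ∈ Ω := by
  intro T hT
  by_contra hmem
  obtain ⟨f, u, hfu, hux⟩ := geometric_hahn_banach_closed_point hΩconv hΩcl hmem
  -- auxiliary function v
  set v : ℝ → EuclideanSpace ℝ (Fin d) := fun s => x s + (2 / α₁ s) • x' s with hv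
  -- scalar functions
  set ψ : ℝ → ℝ := fun s => f (x s) - u with hψdef
  set χ : ℝ → ℝ := fun s => f (v s) - u with hχdef
  set a : ℝ → ℝ := fun s => 2 * δ s / α₁ s with hadef
  set b : ℝ → ℝ := fun s => α₁ s / 2 + α₁' s / α₁ s - 2 * δ s / α₁ s with hbdef
  set γ : ℝ → ℝ := fun s => α₁ s / 2 with hγdef
  set ψd : ℝ → ℝ := fun s => f (x' s) with hψddef
  set χd : ℝ → ℝ := fun s =>
    a s * (f (y s) - u) + b s * ψ s - (a s + b s) * χ s with hχddef
  have hmem' : ∀ s ∈ Icc t₀ T, t₀ ≤ s := fun s hs => hs.1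
  have hApos : ∀ s ∈ Icc t₀ T, 0 < α₁ s := fun s hs => hα₁pos s hs.1
  -- derivative of v
  have hvderiv : ∀ s ∈ Icc t₀ T, HasDerivAt v
      (x' s + ((2 / α₁ s) • (δ s • (y s - x s) - α₁ s • x' s)
        + ((((0:ℝ) * α₁ s - 2 * α₁' s) / (α₁ s)^2) • x' s))) s := by
    intro s hs
    have h1 : HasDerivAt (fun s => (2:ℝ) / α₁ s)
        (((0:ℝ) * α₁ s - 2 * α₁' s) / (α₁ s)^2) s :=
      (hasDerivAt_const s (2:ℝ)).div (hα₁deriv s hs.1) (hApos s hs).ne'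
    have h2 := h1.smul (hode s hs.1)
    exact (hxderiv s hs.1).add h2
  -- HasDerivAt for ψ and χ
  have hψderiv : ∀ s ∈ Icc t₀ T, HasDerivAt ψ (ψd s) s := fun s hs =>
    ((f.hasFDerivAt.comp_hasDerivAt s (hxderiv s hs.1)).sub_const u)
  have hχderiv : ∀ s ∈ Icc t₀ T, HasDerivAt χ (χd s) s := by
    intro s hs
    have h1 := (f.hasFDerivAt.comp_hasDerivAt s (hvderiv s hs)).sub_const u
    convert h1 using 1
    · rfl
    · rfl
    · rfl
    have hA := (hApos s hs).ne'
    simp only [hχddef, hadef, hbdef, hψdef, hχdef, hv, map_add, map_sub, map_smul,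
      smul_eq_mul, Function.comp]
    field_simp
    ring
  -- relation ψd = γ (χ - ψ)
  have hψdrel : ∀ s ∈ Icc t₀ T, ψd s = γ s * (χ s - ψ s) := by
    intro s hs
    have hA := (hApos s hs).ne'
    simp only [hψddef, hγdef, hχdef, hψdef, hv, map_add, map_smul, smul_eq_mul]
    field_simp
    ring
  -- inequality for χd
  have hχdrel : ∀ s ∈ Icc t₀ T, χd s ≤ b s * ψ s - (a s + b s) * χ s := by
    intro s hs
    have hfy : f (y s) - u < 0 := sub_neg.mpr (hfu (y s) (hy s hs.1))
    have ha' : 0 ≤ a s := by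
      have := (hδpos s hs.1).le
      have := (hApos s hs).le
      simp only [hadef]
      positivity
    have : a s * (f (y s) - u) ≤ 0 := mul_nonpos_of_nonneg_of_nonpos ha' hfy.le
    simp only [hχddef]
    linarith
  -- nonnegativity of coefficients
  have hγpos : ∀ s ∈ Icc t₀ T, 0 ≤ γ s := fun s hs => by
    simp only [hγdef]; linarith [hApos s hs]
  have hapos : ∀ s ∈ Icc t₀ T, 0 ≤ a s := fun s hs => by
    have h1 := (hδpos s hs.1).le
    have h2 := (hApos s hs).le
    simp only [hadef]; positivity
  have hbpos : ∀ s ∈ Icc t₀ T, 0 ≤ b s := by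
    intro s hs
    have h1 := hApos s hs
    have h2 := hcond s hs.1
    have h3 : b s = (α₁ s ^ 2 + 2 * α₁' s - 4 * δ s) / (2 * α₁ s) := by
      simp only [hbdef]
      field_simp
      ring
    rw [h3]
    have h4 : 0 ≤ α₁ s ^ 2 + 2 * α₁' s - 4 * δ s := by linarith
    positivity
  -- initial conditions
  have h0ψ : ψ t₀ ≤ 0 := by
    simp only [hψdef, hinit]
    linarith [hfu x₀ hx₀]
  have h0χ : χ t₀ ≤ 0 := by
    have hA := (hα₁pos t₀ le_rfl).ne'
    have hvt₀ : v t₀ = (1/2 : ℝ) • x₀ + (1/2 : ℝ) • x₁ := by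
      simp only [hv, hinit, hinit', smul_smul]
      have hc : 2 / α₁ t₀ * (1 / 4 * α₁ t₀) = (1/2 : ℝ) := by field_simp; ring
      rw [hc, smul_sub]
      module
    have hvmem : v t₀ ∈ Ω := by
      rw [hvt₀]
      exact hΩconv hx₀ hx₁ (by norm_num) (by norm_num) (by norm_num)
    simp only [hχdef]
    linarith [hfu (v t₀) hvmem]
  have := (barrier hγpos hapos hbpos hψderiv hχderiv hψdrel hχdrel h0ψ h0χ
    T ⟨hT, le_rfl⟩).1
  simp only [hψdef] at this
  linarith
end

section
/- There is a counterexample showing invariance fails without the damping condition: with Ω = [1,2] ⊂ ℝ, α₁(t) = δ(t) = 2, y(t) = 1, x(0) = 2, x'(0) = 0, the unique solution of x'' + 2x' = 2(1 − x) is x(t) = 1 + e^{−t}(cos t + sin t), and x(t) < 1 (hence x(t) ∉ Ω) for t ∈ (π, 3π/2). -/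
open Set Real

lemma aux_d1 (t : ℝ) :
    HasDerivAt (fun t => 1 + Real.exp (-t) * (Real.cos t + Real.sin t))
      (-2 * Real.exp (-t) * Real.sin t) t := by
  have h1 : HasDerivAt (fun t : ℝ => Real.exp (-t)) (-Real.exp (-t)) t := by
    simpa [Function.comp_def] using ((Real.hasDerivAt_exp (-t)).comp t ((hasDerivAt_id t).neg))
  have h2 : HasDerivAt (fun t : ℝ => Real.cos t + Real.sin t)
      (-Real.sin t + Real.cos t) t :=
    (Real.hasDerivAt_cos t).add (Real.hasDerivAt_sin t)
  have := ((h1.mul h2).const_add 1)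
  refine this.congr_deriv ?_
  ring

lemma aux_d2 (t : ℝ) :
    HasDerivAt (fun t => -2 * Real.exp (-t) * Real.sin t)
      (-2 * Real.exp (-t) * (Real.cos t - Real.sin t)) t := by
  have h1 : HasDerivAt (fun t : ℝ => Real.exp (-t)) (-Real.exp (-t)) t := by
    simpa [Function.comp_def] using ((Real.hasDerivAt_exp (-t)).comp t ((hasDerivAt_id t).neg))
  have := (h1.const_mul (-2)).mul (Real.hasDerivAt_sin t)
  refine this.congr_deriv ?_
  ring

/-- Counterexample: for `x'' + 2x' = 2(1 - x)`, `x(0) = 2`, `x'(0) = 0`, the unique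
solution `x(t) = 1 + e^{-t}(cos t + sin t)` leaves `Ω = [1,2]` on `(π, 3π/2)`. -/
theorem stmt_9 :
    let x : ℝ → ℝ := fun t => 1 + Real.exp (-t) * (Real.cos t + Real.sin t)
    x 0 = 2 ∧ deriv x 0 = 0 ∧
      (∀ t : ℝ, deriv (deriv x) t + 2 * deriv x t = 2 * (1 - x t)) ∧
      (∀ t ∈ Ioo π (3 * π / 2), x t < 1 ∧ x t ∉ Icc (1:ℝ) 2) := by
  intro x
  have hd1 : deriv x = fun t => -2 * Real.exp (-t) * Real.sin t := by
    funext t; exact (aux_d1 t).deriv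
  refine ⟨by norm_num [x], by rw [hd1]; simp, ?_, ?_⟩
  · intro t
    have hd2 : deriv (deriv x) t = -2 * Real.exp (-t) * (Real.cos t - Real.sin t) := by
      rw [hd1]; exact (aux_d2 t).deriv
    rw [hd2, hd1]
    simp only [x]
    ring
  · intro t ht
    have hpi := Real.pi_pos
    have hs : Real.sin t < 0 := by
      have : Real.sin (t - π) > 0 := by
        apply Real.sin_pos_of_pos_of_lt_pi <;> [linarith [ht.1]; linarith [ht.2]]
      have h2 : Real.sin (t - π) = -Real.sin t := by
        rw [Real.sin_sub]; simp
      linarith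
    have hc : Real.cos t ≤ 0 := by
      have h1 : Real.cos (t - π) > 0 := by
        apply Real.cos_pos_of_mem_Ioo
        constructor <;> [linarith [ht.1]; linarith [ht.2]]
      have h2 : Real.cos (t - π) = -Real.cos t := by
        rw [Real.cos_sub]; simp
      linarith
    have hx : x t < 1 := by
      have he : Real.exp (-t) > 0 := Real.exp_pos _
      have : Real.cos t + Real.sin t < 0 := by linarith
      simp only [x]
      nlinarith
    exact ⟨hx, fun h => absurd h.1 (by linarith)⟩
end
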